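/- Bound on Q_1: Under the setup assumptions, define Q_1(t_s, t_e) := ∑_{i=1}^l L_{f₀}f_i(t_s, x(t_s)) V_{i0}(t_s, t_e), where V_i(t_s, t_e) := ∫_{t_s}^{t_e} ω₁^{p_i} u_i(ω₁θ) dθ and V_{i0}(t_s, t_e) := ∫_{t_s}^{t_e} ω₁^{p_i} u_i(ω₁θ) V_0(t_s, θ) dθ with u₀ := 1 and p₀ := 0. Then ‖Q_1(t_s, t_e)‖ ≤ π l L Λ₁ ‖x₀‖ ω₁^{p′−1} T₁. -/

import Mathlib

open MeasureTheory Real Filter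

noncomputable section

/-- The state space `ℝ^n`. -/
abbrev E (n : ℕ) := EuclideanSpace ℝ (Fin n)

/-- Lie derivative `L_{f_a} f_b (t,x) = D_x f_b(t,x) [f_a(t,x)]`. -/
def lieDeriv {n : ℕ} (f : ℕ → ℝ → E n → E n)
    (Df : ℕ → ℝ → E n → (E n →L[ℝ] E n)) (a b : ℕ) (t : ℝ) (x : E n) : E n :=
  Df b t x (f a t x)

/-- Second Lie derivative `L_{f_m} L_{f_j} f_i (t,x) = D_x (L_{f_j} f_i)(t,x) [f_m(t,x)]`. -/
def lieDeriv2 {n : ℕ} (f : ℕ → ℝ → E n → E n)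
    (Df : ℕ → ℝ → E n → (E n →L[ℝ] E n))
    (DLf : ℕ → ℕ → ℝ → E n → (E n →L[ℝ] E n)) (m j i : ℕ) (t : ℝ) (x : E n) : E n :=
  DLf j i t x (f m t x)

/-- Lie bracket `[f_i, f_j] = L_{f_i} f_j − L_{f_j} f_i`. -/
def lieBracket {n : ℕ} (f : ℕ → ℝ → E n → E n)
    (Df : ℕ → ℝ → E n → (E n →L[ℝ] E n)) (i j : ℕ) (t : ℝ) (x : E n) : E n :=
  lieDeriv f Df i j t x - lieDeriv f Df j i t x

/-- `γ_{ij}(ω) = (ω^{p_i+p_j}/T) ∫₀^T ∫₀^θ u_j(ωθ) u_i(ωτ) dτ dθ`, `T = 2π/ω`. -/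
def gammaCoeff (p : ℕ → ℝ) (u : ℕ → ℝ → ℝ) (i j : ℕ) (ω : ℝ) : ℝ :=
  ω ^ (p i + p j) / (2 * π / ω) *
    ∫ θ in (0:ℝ)..(2 * π / ω), ∫ τ in (0:ℝ)..θ, u j (ω * θ) * u i (ω * τ)

/-- Regularity of a time-dependent vector field: continuous in the first argument,
globally uniformly `L`-Lipschitz in the second argument, and vanishing at `x = 0`. -/
def RegVF {n : ℕ} (L : ℝ) (g : ℝ → E n → E n) : Prop :=
  (∀ x, Continuous fun t => g t x) ∧
  (∀ t x y, ‖g t x - g t y‖ ≤ L * ‖x - y‖) ∧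
  (∀ t, g t 0 = 0)

/-- Standing assumptions: dither assumptions and vector-field assumptions. -/
structure Hyps {n : ℕ} (l : ℕ)
    (f : ℕ → ℝ → E n → E n)
    (Df : ℕ → ℝ → E n → (E n →L[ℝ] E n))
    (ft : ℕ → ℝ → E n → E n)
    (Lft : ℕ → ℕ → ℝ → E n → E n)
    (DLf : ℕ → ℕ → ℝ → E n → (E n →L[ℝ] E n))
    (u : ℕ → ℝ → ℝ) (p : ℕ → ℝ) (L : ℝ) : Prop where
  hp0 : p 0 = 0
  hu0 : ∀ t, u 0 t = 1
  hp : ∀ i, 1 ≤ i → i ≤ l → p i ∈ Set.Ioo (0:ℝ) 1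
  humeas : ∀ i, i ≤ l → Measurable (u i)
  hubdd : ∀ i, i ≤ l → ∀ t, |u i t| ≤ 1
  huper : ∀ i, i ≤ l → ∀ t, u i (t + 2 * π) = u i t
  huzm : ∀ i, 1 ≤ i → i ≤ l → (∫ t in (0:ℝ)..(2 * π), u i t) = 0
  hLpos : 0 < L
  hDf : ∀ i, i ≤ l → ∀ t x, HasFDerivAt (f i t) (Df i t x) x
  hft : ∀ i, i ≤ l → ∀ x t, HasDerivAt (fun s => f i s x) (ft i t x) t
  hLft : ∀ i j, i ≤ l → j ≤ l → ∀ x t,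
    HasDerivAt (fun s => lieDeriv f Df j i s x) (Lft j i t x) t
  hDLf : ∀ i j, i ≤ l → j ≤ l → ∀ t x,
    HasFDerivAt (fun y => lieDeriv f Df j i t y) (DLf j i t x) x
  hreg_f : ∀ i, i ≤ l → RegVF L (f i)
  hreg_ft : ∀ i, i ≤ l → RegVF L (ft i)
  hreg_Lf : ∀ i j, i ≤ l → j ≤ l → RegVF L (lieDeriv f Df j i)
  hreg_Lft : ∀ i j, i ≤ l → j ≤ l → RegVF L (Lft j i)
  hreg_LLf : ∀ i j m, i ≤ l → j ≤ l → m ≤ l → RegVF L (lieDeriv2 f Df DLf m j i)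

/-- The interaction condition on the powers `p_i` and the Lie brackets. -/
def InteractionCondition {n : ℕ} (l : ℕ) (f : ℕ → ℝ → E n → E n)
    (Df : ℕ → ℝ → E n → (E n →L[ℝ] E n)) (u : ℕ → ℝ → ℝ) (p : ℕ → ℝ) : Prop :=
  ∀ i j, 1 ≤ i → i ≤ l → 1 ≤ j → j ≤ l → 1 < p i + p j →
    (∀ ω : ℝ, 0 < ω → gammaCoeff p u i j ω = 0) ∨
    (∀ (t : ℝ) (x : E n), lieBracket f Df i j t x = 0)

/-- `x` is a (Carathéodory, i.e. integral-form) solution of the input-affine system (S)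
with dither frequency `ω` on the set `s`, with initial time `t₀`. -/
def IsSSol {n : ℕ} (l : ℕ) (f : ℕ → ℝ → E n → E n) (u : ℕ → ℝ → ℝ) (p : ℕ → ℝ)
    (ω : ℝ) (x : ℝ → E n) (s : Set ℝ) (t₀ : ℝ) : Prop :=
  ContinuousOn x s ∧
  ∀ t ∈ s, x t = x t₀ + ∫ τ in t₀..t,
    (f 0 τ (x τ) + ∑ i ∈ Finset.Icc 1 l, (ω ^ p i * u i (ω * τ)) • f i τ (x τ))

/-- `x` is a solution of the associated Lie-bracket system (LBS), with coefficients
`ν i j = lim_{ω → ∞} γ_{ij}(ω)`, on the set `s`, with initial time `t₀`. -/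
def IsLBSSol {n : ℕ} (l : ℕ) (f : ℕ → ℝ → E n → E n)
    (Df : ℕ → ℝ → E n → (E n →L[ℝ] E n)) (ν : ℕ → ℕ → ℝ)
    (x : ℝ → E n) (s : Set ℝ) (t₀ : ℝ) : Prop :=
  ContinuousOn x s ∧
  ∀ t ∈ s, x t = x t₀ + ∫ τ in t₀..t,
    (f 0 τ (x τ) + ∑ i ∈ Finset.Icc 1 l, ∑ j ∈ Finset.Ioc i l,
      ν i j • lieBracket f Df i j τ (x τ))

end
noncomputable section

/-- `V_i(t_s, t_e) = ∫_{t_s}^{t_e} ω₁^{p_i} u_i(ω₁ θ) dθ`. -/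
def Vi (u : ℕ → ℝ → ℝ) (p : ℕ → ℝ) (ω₁ : ℝ) (i : ℕ) (ts te : ℝ) : ℝ :=
  ∫ θ in ts..te, ω₁ ^ p i * u i (ω₁ * θ)

/-- `V_{ij}(t_s, t_e) = ∫_{t_s}^{t_e} ω₁^{p_i} u_i(ω₁ θ) V_j(t_s, θ) dθ`. -/
def Vij (u : ℕ → ℝ → ℝ) (p : ℕ → ℝ) (ω₁ : ℝ) (i j : ℕ) (ts te : ℝ) : ℝ :=
  ∫ θ in ts..te, (ω₁ ^ p i * u i (ω₁ * θ)) * Vi u p ω₁ j ts θ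

/-- The remainder `R(t_s, t_e)`. -/
def Rrem {n : ℕ} (l : ℕ) (f : ℕ → ℝ → E n → E n)
    (Df : ℕ → ℝ → E n → (E n →L[ℝ] E n))
    (DLf : ℕ → ℕ → ℝ → E n → (E n →L[ℝ] E n))
    (u : ℕ → ℝ → ℝ) (p : ℕ → ℝ) (ω₁ : ℝ) (x : ℝ → E n) (ts te : ℝ) : E n :=
  ∑ i ∈ Finset.Icc 1 l, ∑ j ∈ Finset.Icc 0 l, ∑ m ∈ Finset.Icc 0 l,
    ω₁ ^ (p i + p j + p m) •
      ∫ θ in ts..te, u i (ω₁ * θ) •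
        ∫ τ in ts..θ, u j (ω₁ * τ) •
          ∫ σ in ts..τ, u m (ω₁ * σ) • lieDeriv2 f Df DLf m j i σ (x σ)

/-- The term `Q_{V1}(t_s, t_e)`. -/
def QV1 {n : ℕ} (l : ℕ) (ft : ℕ → ℝ → E n → E n)
    (u : ℕ → ℝ → ℝ) (p : ℕ → ℝ) (ω₁ : ℝ) (x : ℝ → E n) (ts te : ℝ) : E n :=
  ∑ i ∈ Finset.Icc 1 l, ω₁ ^ p i •
    ∫ θ in ts..te, u i (ω₁ * θ) • ∫ τ in ts..θ, ft i τ (x τ)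

/-- The term `Q_{V2}(t_s, t_e)`. -/
def QV2 {n : ℕ} (l : ℕ) (Lft : ℕ → ℕ → ℝ → E n → E n)
    (u : ℕ → ℝ → ℝ) (p : ℕ → ℝ) (ω₁ : ℝ) (x : ℝ → E n) (ts te : ℝ) : E n :=
  ∑ i ∈ Finset.Ico 1 l, ∑ j ∈ Finset.Icc 0 l,
    ω₁ ^ (p i + p j) •
      ∫ θ in ts..te, u i (ω₁ * θ) •
        ∫ τ in ts..θ, u j (ω₁ * τ) • ∫ σ in ts..τ, Lft j i σ (x σ)

/-- The term `Q_1(t_s, t_e)`. -/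
def Q1 {n : ℕ} (l : ℕ) (f : ℕ → ℝ → E n → E n)
    (Df : ℕ → ℝ → E n → (E n →L[ℝ] E n))
    (u : ℕ → ℝ → ℝ) (p : ℕ → ℝ) (ω₁ : ℝ) (x : ℝ → E n) (ts te : ℝ) : E n :=
  ∑ i ∈ Finset.Icc 1 l, Vij u p ω₁ i 0 ts te • lieDeriv f Df 0 i ts (x ts)

/-- The term `Q_{1T}(t_s, t_e)`. -/
def Q1T {n : ℕ} (l : ℕ) (f : ℕ → ℝ → E n → E n)
    (Df : ℕ → ℝ → E n → (E n →L[ℝ] E n))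
    (u : ℕ → ℝ → ℝ) (p : ℕ → ℝ) (ω₁ : ℝ) (x : ℝ → E n) (ts te : ℝ) : E n :=
  (∑ i ∈ Finset.Icc 1 l, ∑ j ∈ Finset.Ioc i l,
    (Vi u p ω₁ i ts te * Vi u p ω₁ j ts te) • lieDeriv f Df j i ts (x ts))
  + (1/2 : ℝ) • ∑ i ∈ Finset.Icc 1 l,
      ((Vi u p ω₁ i ts te) ^ 2) • lieDeriv f Df i i ts (x ts)

/-- The term `H(t_s, t_e)`. -/
def Hterm {n : ℕ} (l : ℕ) (f : ℕ → ℝ → E n → E n)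
    (Df : ℕ → ℝ → E n → (E n →L[ℝ] E n))
    (u : ℕ → ℝ → ℝ) (p : ℕ → ℝ) (ω₁ : ℝ) (x : ℝ → E n) (ts te : ℝ) : E n :=
  (∑ i ∈ Finset.Icc 1 l, Vi u p ω₁ i ts te • f i ts (x ts))
  + ∑ i ∈ Finset.Icc 1 l, ∑ j ∈ Finset.Ioc i l,
      Vij u p ω₁ j i ts te • lieBracket f Df i j ts (x ts)

/-- The term `I(t_s, t_e)`. -/
def Iterm {n : ℕ} (l : ℕ) (f : ℕ → ℝ → E n → E n)
    (Df : ℕ → ℝ → E n → (E n →L[ℝ] E n))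
    (u : ℕ → ℝ → ℝ) (p : ℕ → ℝ) (ω₁ : ℝ) (x : ℝ → E n) (ts te : ℝ) : E n :=
  ∫ θ in ts..te, ∑ i ∈ Finset.Icc 1 l, ∑ j ∈ Finset.Ioc i l,
    gammaCoeff p u i j ω₁ • lieBracket f Df i j θ (x θ)

/-- The term `R_{L1}(t_s, t_e)`. -/
def RL1 {n : ℕ} (l : ℕ) (f : ℕ → ℝ → E n → E n)
    (Df : ℕ → ℝ → E n → (E n →L[ℝ] E n))
    (u : ℕ → ℝ → ℝ) (p : ℕ → ℝ) (ω₁ : ℝ) (x : ℝ → E n) (ts te : ℝ) : E n :=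
  ∑ i ∈ Finset.Icc 1 l, ∑ j ∈ Finset.Ioc i l,
    gammaCoeff p u i j ω₁ •
      ∫ θ in ts..te, (lieBracket f Df i j ts (x ts) - lieBracket f Df i j θ (x θ))

/-- The remainder `R_{T1}(t₀, t₁)`. -/
def RT1 {n : ℕ} (l : ℕ) (f : ℕ → ℝ → E n → E n)
    (Df : ℕ → ℝ → E n → (E n →L[ℝ] E n))
    (ft : ℕ → ℝ → E n → E n) (Lft : ℕ → ℕ → ℝ → E n → E n)
    (u : ℕ → ℝ → ℝ) (p : ℕ → ℝ) (ω₁ : ℝ) (x : ℝ → E n) (t₀ t₁ : ℝ) : E n :=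
  let T₁ : ℝ := 2 * π / ω₁
  let r : ℕ := ⌊(t₁ - t₀) / T₁⌋₊
  let tq : ℕ → ℝ := fun q => t₀ + (q : ℝ) * T₁
  (∑ q ∈ Finset.range r,
      (QV1 l ft u p ω₁ x (tq q) (tq (q+1)) + QV2 l Lft u p ω₁ x (tq q) (tq (q+1))
        + Q1 l f Df u p ω₁ x (tq q) (tq (q+1)) + RL1 l f Df u p ω₁ x (tq q) (tq (q+1))))
    - Iterm l f Df u p ω₁ x (tq r) t₁
    + QV1 l ft u p ω₁ x (tq r) t₁ + QV2 l Lft u p ω₁ x (tq r) t₁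
    + Q1 l f Df u p ω₁ x (tq r) t₁ + Q1T l f Df u p ω₁ x (tq r) t₁
    + Hterm l f Df u p ω₁ x (tq r) t₁

end

/-! Since `u₀ = 1` and `p₀ = 0`, `V₀(t_s, θ) = θ - t_s`, so `V_{i0}(t_s, t_e)` integrates a
function bounded by `ω₁^{p′}(θ - t_s)` and is at most `ω₁^{p′}(t_e - t_s)²/2 ≤ ω₁^{p′}T₁²/2`.
Each Lie derivative `L_{f₀}f_i` is `L`-Lipschitz and vanishes at `0`, so at `x(t_s)` it has
norm at most `LΛ₁‖x₀‖`. Summing over the `l` inputs and using `T₁²/2 = π T₁/ω₁` gives the bound. -/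

lemma RegVF.norm_le {n : ℕ} {L : ℝ} {g : ℝ → E n → E n} (hg : RegVF L g) (t : ℝ) (x : E n) :
    ‖g t x‖ ≤ L * ‖x‖ := by
  simpa [hg.2.2 t] using hg.2.1 t x 0

lemma Vi_zero_eq {u : ℕ → ℝ → ℝ} {p : ℕ → ℝ} (hp0 : p 0 = 0) (hu0 : ∀ t, u 0 t = 1)
    (ω ts θ : ℝ) : Vi u p ω 0 ts θ = θ - ts := by
  simp [Vi, hp0, hu0]

lemma abs_integral_mul_sub_le {g : ℝ → ℝ} {a b C : ℝ} (hab : a ≤ b)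
    (hg : ∀ θ ∈ Set.Ioc a b, |g θ| ≤ C) :
    |∫ θ in a..b, g θ * (θ - a)| ≤ C * ((b - a) ^ 2 / 2) := by
  have hbound : ∀ θ ∈ Set.Ioc a b, ‖g θ * (θ - a)‖ ≤ C * (θ - a) := fun θ hθ => by
    rw [Real.norm_eq_abs, abs_mul, abs_of_nonneg (by linarith [hθ.1] : 0 ≤ θ - a)]
    exact mul_le_mul_of_nonneg_right (hg θ hθ) (by linarith [hθ.1])
  have hint : ∫ θ in a..b, C * (θ - a) = C * ((b - a) ^ 2 / 2) := by
    rw [intervalIntegral.integral_const_mul, intervalIntegral.integral_comp_sub_right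
      (fun θ => θ), sub_self, integral_id]
    ring
  rw [← hint, ← Real.norm_eq_abs]
  exact intervalIntegral.norm_integral_le_of_norm_le hab (Filter.Eventually.of_forall hbound)
    (Continuous.intervalIntegrable (by fun_prop) a b)

lemma abs_Vij_zero_le {u : ℕ → ℝ → ℝ} {p : ℕ → ℝ} (hp0 : p 0 = 0) (hu0 : ∀ t, u 0 t = 1)
    {ω p' ts te : ℝ} (hω : 1 ≤ ω) {i : ℕ} (hui : ∀ t, |u i t| ≤ 1) (hpi : p i ≤ p')
    (hste : ts ≤ te) :
    |Vij u p ω i 0 ts te| ≤ ω ^ p' * ((te - ts) ^ 2 / 2) := by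
  simp only [Vij, Vi_zero_eq hp0 hu0]
  refine abs_integral_mul_sub_le hste fun θ _ => ?_
  rw [abs_mul, abs_of_nonneg (by positivity : 0 ≤ ω ^ p i)]
  calc ω ^ p i * |u i (ω * θ)| ≤ ω ^ p' * 1 :=
        mul_le_mul (Real.rpow_le_rpow_of_exponent_le hω hpi) (hui _)
          (abs_nonneg _) (by positivity)
    _ = ω ^ p' := mul_one _

lemma norm_Q1_le {n : ℕ} {l : ℕ} {f : ℕ → ℝ → E n → E n}
    {Df : ℕ → ℝ → E n → (E n →L[ℝ] E n)} {ft : ℕ → ℝ → E n → E n}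
    {Lft : ℕ → ℕ → ℝ → E n → E n} {DLf : ℕ → ℕ → ℝ → E n → (E n →L[ℝ] E n)}
    {u : ℕ → ℝ → ℝ} {p : ℕ → ℝ} {L : ℝ} (hyp : Hyps l f Df ft Lft DLf u p L)
    {ω p' ts te : ℝ} (hω : 1 ≤ ω) (hp' : ∀ i, 1 ≤ i → i ≤ l → p i ≤ p') (hste : ts ≤ te)
    (x : ℝ → E n) :
    ‖Q1 l f Df u p ω x ts te‖ ≤ l * (ω ^ p' * ((te - ts) ^ 2 / 2) * (L * ‖x ts‖)) := by
  have hterm : ∀ i ∈ Finset.Icc 1 l, ‖Vij u p ω i 0 ts te • lieDeriv f Df 0 i ts (x ts)‖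
      ≤ ω ^ p' * ((te - ts) ^ 2 / 2) * (L * ‖x ts‖) := fun i hi => by
    obtain ⟨hi1, hil⟩ := Finset.mem_Icc.mp hi
    rw [norm_smul, Real.norm_eq_abs]
    exact mul_le_mul (abs_Vij_zero_le hyp.hp0 hyp.hu0 hω (hyp.hubdd i hil) (hp' i hi1 hil) hste)
      ((hyp.hreg_Lf i 0 hil l.zero_le).norm_le ts (x ts)) (norm_nonneg _) (by positivity)
  calc ‖Q1 l f Df u p ω x ts te‖
      ≤ ∑ i ∈ Finset.Icc 1 l, ‖Vij u p ω i 0 ts te • lieDeriv f Df 0 i ts (x ts)‖ :=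
        norm_sum_le _ _
    _ ≤ ∑ _i ∈ Finset.Icc 1 l, ω ^ p' * ((te - ts) ^ 2 / 2) * (L * ‖x ts‖) :=
        Finset.sum_le_sum hterm
    _ = l * (ω ^ p' * ((te - ts) ^ 2 / 2) * (L * ‖x ts‖)) := by
        simp [Finset.sum_const, Nat.card_Icc, nsmul_eq_mul]

theorem bound_Q1_general
    {n : ℕ} (l : ℕ)
    (f : ℕ → ℝ → E n → E n)
    (Df : ℕ → ℝ → E n → (E n →L[ℝ] E n))
    (ft : ℕ → ℝ → E n → E n)
    (Lft : ℕ → ℕ → ℝ → E n → E n)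
    (DLf : ℕ → ℕ → ℝ → E n → (E n →L[ℝ] E n))
    (u : ℕ → ℝ → ℝ) (p : ℕ → ℝ) (L : ℝ)
    (hyp : Hyps l f Df ft Lft DLf u p L)
    -- setup: a bounded solution of (S) with frequency `ω₁ ≥ 1` on `[t₀, t₁]`
    (t₀ t₁ ω₁ Λ₁ : ℝ) (x₀ : E n) (x : ℝ → E n)
    (hω₁ : 1 ≤ ω₁)
    (hxb : ∀ t ∈ Set.Icc t₀ t₁, ‖x t‖ ≤ Λ₁ * ‖x₀‖)
    -- `p′ = max_{1 ≤ i ≤ l} p i`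
    (p' : ℝ)
    (hp'ub : ∀ i, 1 ≤ i → i ≤ l → p i ≤ p')
    -- `t_s ∈ [t₀, t_r]` and `t_e ∈ [t_s, min (t_s + T₁) t₁]`, where `T₁ = 2π/ω₁`
    (ts te : ℝ)
    (hts : ts ∈ Set.Icc t₀ (t₀ + (⌊(t₁ - t₀) / (2 * π / ω₁)⌋₊ : ℝ) * (2 * π / ω₁)))
    (hte : te ∈ Set.Icc ts (min (ts + 2 * π / ω₁) t₁)) :
    ‖Q1 l f Df u p ω₁ x ts te‖
      ≤ π * l * L * Λ₁ * ‖x₀‖ * ω₁ ^ (p' - 1) * (2 * π / ω₁) := by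
  have hω₁pos : 0 < ω₁ := zero_lt_one.trans_le hω₁
  obtain ⟨hste, hteT⟩ := hte
  have hxts : ‖x ts‖ ≤ Λ₁ * ‖x₀‖ := hxb ts ⟨hts.1, hste.trans (hteT.trans (min_le_right _ _))⟩
  have hlen : (te - ts) ^ 2 ≤ (2 * π / ω₁) ^ 2 :=
    pow_le_pow_left₀ (by linarith) (by linarith [min_le_left (ts + 2 * π / ω₁) t₁]) 2
  calc ‖Q1 l f Df u p ω₁ x ts te‖
      ≤ l * (ω₁ ^ p' * ((te - ts) ^ 2 / 2) * (L * ‖x ts‖)) := norm_Q1_le hyp hω₁ hp'ub hste x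
    _ ≤ l * (ω₁ ^ p' * ((2 * π / ω₁) ^ 2 / 2) * (L * (Λ₁ * ‖x₀‖))) := by
        have hL : 0 < L := hyp.hLpos
        gcongr
    _ = π * l * L * Λ₁ * ‖x₀‖ * ω₁ ^ (p' - 1) * (2 * π / ω₁) := by
        rw [Real.rpow_sub hω₁pos, Real.rpow_one]
        field_simp

/-- **Bound on `Q_1`** (Lemma 10). -/
theorem bound_Q1
    {n : ℕ} (l : ℕ)
    (f : ℕ → ℝ → E n → E n)
    (Df : ℕ → ℝ → E n → (E n →L[ℝ] E n))
    (ft : ℕ → ℝ → E n → E n)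
    (Lft : ℕ → ℕ → ℝ → E n → E n)
    (DLf : ℕ → ℕ → ℝ → E n → (E n →L[ℝ] E n))
    (u : ℕ → ℝ → ℝ) (p : ℕ → ℝ) (L : ℝ)
    (hyp : Hyps l f Df ft Lft DLf u p L)
    -- setup: a bounded solution of (S) with frequency `ω₁ ≥ 1` on `[t₀, t₁]`
    (t₀ t₁ ω₁ Λ₁ : ℝ) (x₀ : E n) (x : ℝ → E n)
    (h01 : t₀ < t₁) (hω₁ : 1 ≤ ω₁) (hΛ₁ : 1 ≤ Λ₁)
    (hx0 : x t₀ = x₀)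
    (hsol : IsSSol l f u p ω₁ x (Set.Icc t₀ t₁) t₀)
    (hxb : ∀ t ∈ Set.Icc t₀ t₁, ‖x t‖ ≤ Λ₁ * ‖x₀‖)
    -- `p′ = max_{1 ≤ i ≤ l} p i`
    (p' : ℝ)
    (hp'ub : ∀ i, 1 ≤ i → i ≤ l → p i ≤ p')
    (hp'mem : ∃ i, 1 ≤ i ∧ i ≤ l ∧ p i = p')
    -- `t_s ∈ [t₀, t_r]` and `t_e ∈ [t_s, min (t_s + T₁) t₁]`, where `T₁ = 2π/ω₁`
    (ts te : ℝ)
    (hts : ts ∈ Set.Icc t₀ (t₀ + (⌊(t₁ - t₀) / (2 * π / ω₁)⌋₊ : ℝ) * (2 * π / ω₁)))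
    (hte : te ∈ Set.Icc ts (min (ts + 2 * π / ω₁) t₁)) :
    ‖Q1 l f Df u p ω₁ x ts te‖
      ≤ π * l * L * Λ₁ * ‖x₀‖ * ω₁ ^ (p' - 1) * (2 * π / ω₁) :=
  bound_Q1_general l f Df ft Lft DLf u p L hyp t₀ t₁ ω₁ Λ₁ x₀ x hω₁ hxb p' hp'ub ts te hts hte
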